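/- arXiv:1712.07082 — 6 statements merged into one kernel-verified Lean document; each statement's English description precedes it below -/
import Mathlib

section
/- For every n ∈ ℕ, every t ∈ [0,1], and every θ ∈ ℝ with 0 < |θ| ≤ nπ, one has |(1/n)·∑_{j=1}^{⌊nt⌋} e^{i j θ/n}| ≤ π · min{ t , 1/|θ| }. -/
/-! With `z = exp (i θ / n)` the sum is the geometric sum `∑_{j=1}^{⌊nt⌋} z ^ j`. Since `‖z‖ = 1`,
it has norm at most its number of terms `⌊nt⌋ ≤ nt`, and also at most `2 / ‖z - 1‖`; as
`|θ / n| ≤ π`, Jordan's inequality gives `‖z - 1‖ = 2 |sin (θ / 2n)| ≥ 2 |θ| / (n π)`. -/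

open Finset Real

section GeomSum

variable {K : Type*} [NormedDivisionRing K] {z : K}

lemma norm_pow_le_one_of_norm_le_one (hz : ‖z‖ ≤ 1) (k : ℕ) : ‖z ^ k‖ ≤ 1 := by
  rw [norm_pow]; exact pow_le_one₀ (norm_nonneg z) hz

lemma norm_sum_pow_le_card (hz : ‖z‖ ≤ 1) (s : Finset ℕ) : ‖∑ i ∈ s, z ^ i‖ ≤ #s := by
  simpa using norm_sum_le_of_le s fun i _ ↦ norm_pow_le_one_of_norm_le_one hz i

lemma norm_geom_sum_Ico_le (hz : ‖z‖ ≤ 1) (hz1 : z ≠ 1) (a b : ℕ) :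
    ‖∑ i ∈ Ico a b, z ^ i‖ ≤ 2 / ‖z - 1‖ := by
  rcases le_or_gt a b with hab | hba
  · rw [geom_sum_Ico hz1 hab, norm_div]
    gcongr
    calc ‖z ^ b - z ^ a‖ ≤ ‖z ^ b‖ + ‖z ^ a‖ := norm_sub_le _ _
      _ ≤ 2 := by
        linarith [norm_pow_le_one_of_norm_le_one hz a, norm_pow_le_one_of_norm_le_one hz b]
  · simp [Ico_eq_empty_of_le hba.le, div_nonneg]

end GeomSum

lemma mul_abs_le_norm_exp_I_mul_ofReal_sub_one {x : ℝ} (hx : |x| ≤ π) :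
    2 / π * |x| ≤ ‖Complex.exp (Complex.I * x) - 1‖ := by
  have hsin := mul_abs_le_abs_sin (x := x / 2) (by rw [abs_div, abs_two]; linarith)
  rw [Complex.norm_exp_I_mul_ofReal_sub_one, norm_mul, Real.norm_two, Real.norm_eq_abs]
  rw [abs_div, abs_two] at hsin
  linarith

lemma exp_I_mul_natCast_mul (j : ℕ) (x : ℂ) :
    Complex.exp (Complex.I * j * x) = Complex.exp (Complex.I * x) ^ j := by
  rw [← Complex.exp_nat_mul]
  ring_nf

lemma norm_sum_exp_I_mul_le {x : ℝ} (hx0 : x ≠ 0) (hx : |x| ≤ π) (a b : ℕ) :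
    ‖∑ j ∈ Ico a b, Complex.exp (Complex.I * j * x)‖ ≤ π / |x| := by
  have hlow : 0 < 2 / π * |x| := by positivity
  have hdist := mul_abs_le_norm_exp_I_mul_ofReal_sub_one hx
  have hz1 : Complex.exp (Complex.I * x) ≠ 1 := by
    intro h; rw [h, sub_self, norm_zero] at hdist; linarith
  simp_rw [exp_I_mul_natCast_mul]
  calc _ ≤ 2 / ‖Complex.exp (Complex.I * x) - 1‖ :=
        norm_geom_sum_Ico_le (Complex.norm_exp_I_mul_ofReal x).le hz1 a b
    _ ≤ 2 / (2 / π * |x|) := by gcongr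
    _ = π / |x| := by field_simp

/-- For every `n ∈ ℕ`, `t ∈ [0,1]` and `θ` with `0 < |θ| ≤ nπ`,
`|(1/n) ∑_{j=1}^{⌊nt⌋} e^{i j θ/n}| ≤ π · min{t, 1/|θ|}`. -/
theorem stmt_1 (n : ℕ) (t : ℝ) (ht : t ∈ Set.Icc (0:ℝ) 1) (θ : ℝ)
    (hθ : 0 < |θ|) (hθn : |θ| ≤ (n : ℝ) * Real.pi) :
    ‖(1 / (n : ℂ)) * ∑ j ∈ Finset.Icc 1 ⌊(n : ℝ) * t⌋₊,
        Complex.exp (Complex.I * (j : ℂ) * ((θ / n : ℝ) : ℂ))‖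
      ≤ Real.pi * min t (1 / |θ|) := by
  have hn : (0 : ℝ) < n := pos_of_mul_pos_left (hθ.trans_le hθn) pi_pos.le
  have habs_div : |θ / n| = |θ| / n := by rw [abs_div, abs_of_pos hn]
  have hθn_le_pi : |θ / n| ≤ π := by rw [habs_div, div_le_iff₀ hn, mul_comm]; exact hθn
  have hθn_ne : θ / n ≠ 0 := div_ne_zero (abs_pos.mp hθ) hn.ne'
  rw [norm_mul, norm_div, norm_one, Complex.norm_natCast, mul_min_of_nonneg _ _ pi_pos.le]
  refine le_min ?_ ?_
  · have hcard := norm_sum_pow_le_card (Complex.norm_exp_I_mul_ofReal ((θ : ℝ) / n)).le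
      (Icc 1 ⌊(n : ℝ) * t⌋₊)
    simp_rw [← exp_I_mul_natCast_mul] at hcard
    calc _ ≤ 1 / n * (n * t) := by
          gcongr
          exact hcard.trans (by simpa using Nat.floor_le (mul_nonneg hn.le ht.1))
      _ = t := by field_simp
      _ ≤ π * t := le_mul_of_one_le_left ht.1 (by linarith [pi_gt_three])
  · rw [← Ico_add_one_right_eq_Icc]
    calc _ ≤ 1 / n * (π / |θ / n|) := by
          gcongr; exact norm_sum_exp_I_mul_le hθn_ne hθn_le_pi _ _
      _ = π * (1 / |θ|) := by rw [habs_div]; field_simp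
end

section
/- Let α > 0, w > 0, θ ∈ ℝ with θ ≠ 0, and γ ∈ ℝ, and set H := (3 − α(γ−1))/2. If H ∈ (1/2, 3/2), then ∫_0^∞ r^{−γ} / ((r w)^{−2/α} + θ²) dr = (α/2) · B(H − 1/2, 3/2 − H) · w^{γ−1} · |θ|^{1−2H}, where B(a,b) = ∫_0^1 x^{a−1}(1−x)^{b−1} dx is the Beta function. -/
open MeasureTheory

open Real Set


lemma lintegral_image_eq_lintegral_abs_deriv_mul' {s : Set ℝ} {f f' : ℝ → ℝ}
    (hs : MeasurableSet s) (hf' : ∀ x ∈ s, HasDerivWithinAt f (f' x) s x)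
    (hf : Set.InjOn f s) (g : ℝ → ENNReal) :
    ∫⁻ x in f '' s, g x = ∫⁻ x in s, ENNReal.ofReal |f' x| * g (f x) := by
  simpa only [ContinuousLinearMap.det_toSpanSingleton] using
    lintegral_image_eq_lintegral_abs_det_fderiv_mul volume hs
      (fun x hx => (hf' x hx).hasFDerivWithinAt) hf g

lemma betaIntegrableOn {a b : ℝ} (ha : 0 < a) (hb : 0 < b) (ha1 : a < 1) (hb1 : b < 1) :
    IntegrableOn (fun x : ℝ => x ^ (a-1) * (1-x) ^ (b-1)) (Set.Ioo 0 1) := by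
  have hmeas : Measurable (fun x : ℝ => x ^ (a-1) * (1-x) ^ (b-1)) := by fun_prop
  have h1 : IntegrableOn (fun x : ℝ => x ^ (a-1)) (Set.Ioc 0 2⁻¹) := by
    have := intervalIntegral.intervalIntegrable_rpow' (a := 0) (b := 2⁻¹)
      (show (-1:ℝ) < a - 1 by linarith)
    rwa [intervalIntegrable_iff_integrableOn_Ioc_of_le (by norm_num)] at this
  have h2 : IntegrableOn (fun x : ℝ => (1-x) ^ (b-1)) (Set.Ioc 2⁻¹ 1) := by
    have := ((intervalIntegral.intervalIntegrable_rpow' (a := 0) (b := 2⁻¹)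
      (show (-1:ℝ) < b - 1 by linarith)).comp_sub_left 1).symm
    rw [show (1:ℝ) - 0 = 1 by norm_num, show (1:ℝ) - 2⁻¹ = 2⁻¹ by norm_num] at this
    rwa [intervalIntegrable_iff_integrableOn_Ioc_of_le (by norm_num)] at this
  have hA : IntegrableOn (fun x : ℝ => x ^ (a-1) * (1-x) ^ (b-1)) (Set.Ioc 0 2⁻¹) := by
    refine Integrable.mono' (h1.const_mul ((2:ℝ) ^ (1-b)))
      hmeas.aestronglyMeasurable.restrict ?_
    refine (ae_restrict_iff' measurableSet_Ioc).mpr (ae_of_all _ fun x hx => ?_)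
    have hx0 : 0 < x := hx.1
    have hx2 : x ≤ 2⁻¹ := hx.2
    have h1x : (2⁻¹:ℝ) ≤ 1 - x := by linarith
    rw [Real.norm_eq_abs, abs_of_nonneg (by positivity)]
    have : (1-x) ^ (b-1) ≤ (2⁻¹:ℝ) ^ (b-1) :=
      rpow_le_rpow_of_nonpos (by norm_num) h1x (by linarith)
    have h2b : ((2:ℝ)⁻¹) ^ (b-1) = (2:ℝ) ^ (1-b) := by
      rw [← Real.rpow_neg_one (2:ℝ), ← Real.rpow_mul (by norm_num)]
      norm_num
    calc x ^ (a-1) * (1-x) ^ (b-1) ≤ x ^ (a-1) * (2⁻¹:ℝ) ^ (b-1) := by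
          exact mul_le_mul_of_nonneg_left this (by positivity)
      _ = (2:ℝ) ^ (1-b) * x ^ (a-1) := by rw [h2b]; ring
  have hB : IntegrableOn (fun x : ℝ => x ^ (a-1) * (1-x) ^ (b-1)) (Set.Ioc 2⁻¹ 1) := by
    refine Integrable.mono' (h2.const_mul ((2:ℝ) ^ (1-a)))
      hmeas.aestronglyMeasurable.restrict ?_
    refine (ae_restrict_iff' measurableSet_Ioc).mpr (ae_of_all _ fun x hx => ?_)
    have hx0 : (2⁻¹:ℝ) ≤ x := hx.1.le
    have hx1 : x ≤ 1 := hx.2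
    rw [Real.norm_eq_abs, abs_of_nonneg (mul_nonneg (rpow_nonneg (by linarith) _)
      (rpow_nonneg (by linarith) _))]
    have hxa : x ^ (a-1) ≤ (2⁻¹:ℝ) ^ (a-1) :=
      rpow_le_rpow_of_nonpos (by norm_num) hx0 (by linarith)
    have h2a : ((2:ℝ)⁻¹) ^ (a-1) = (2:ℝ) ^ (1-a) := by
      rw [← Real.rpow_neg_one (2:ℝ), ← Real.rpow_mul (by norm_num)]
      norm_num
    calc x ^ (a-1) * (1-x) ^ (b-1) ≤ (2⁻¹:ℝ) ^ (a-1) * (1-x) ^ (b-1) := by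
          exact mul_le_mul_of_nonneg_right hxa (rpow_nonneg (by linarith) _)
      _ = (2:ℝ) ^ (1-a) * (1-x) ^ (b-1) := by rw [h2a]
  exact (hA.union hB).mono_set (fun x hx =>
    (le_or_gt x 2⁻¹).imp (fun h => ⟨hx.1, h⟩) (fun h => ⟨h, hx.2.le⟩))

/-- For `α > 0`, `w > 0`, `θ ≠ 0`, `γ ∈ ℝ` and `H := (3 - α(γ-1))/2 ∈ (1/2, 3/2)`,
`∫_0^∞ r^{-γ}/((rw)^{-2/α} + θ²) dr = (α/2) B(H-1/2, 3/2-H) w^{γ-1} |θ|^{1-2H}`, where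
`B(a,b) = ∫_0^1 x^{a-1}(1-x)^{b-1} dx` is the Beta function. -/
theorem stmt_3 (α w θ γ H : ℝ) (hα : 0 < α) (hw : 0 < w) (hθ : θ ≠ 0)
    (hH : H = (3 - α * (γ - 1)) / 2) (hH2 : H ∈ Set.Ioo (1/2 : ℝ) (3/2 : ℝ)) :
    ∫⁻ r in Set.Ioi (0:ℝ),
        ENNReal.ofReal (r ^ (-γ) / ((r * w) ^ (-2/α) + θ ^ 2))
      = ENNReal.ofReal ((α / 2)
          * (∫ x in (0:ℝ)..1, x ^ ((H - 1/2) - 1) * (1 - x) ^ ((3/2 - H) - 1))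
          * w ^ (γ - 1) * |θ| ^ (1 - 2 * H)) := by
  obtain ⟨hH1, hH3⟩ := hH2
  have hθa : 0 < |θ| := abs_pos.mpr hθ
  have hθ2 : (0:ℝ) < θ ^ 2 := by positivity
  have ht : 0 < w * |θ| ^ α := mul_pos hw (rpow_pos_of_pos hθa _)
  set t : ℝ := w * |θ| ^ α with ht_def
  have hαγ : α * (γ - 1) = 3 - 2 * H := by linarith
  have hp : (-(α/2)) ≠ 0 := neg_ne_zero.mpr (by positivity : (0:ℝ) < α/2).ne'
  have hθsq : |θ| ^ (2:ℝ) = θ ^ 2 := by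
    rw [show (2:ℝ) = ((2:ℕ):ℝ) by norm_num, Real.rpow_natCast, sq_abs]
  have hK : 0 ≤ α / 2 * w ^ (γ - 1) * |θ| ^ (1 - 2 * H) := by positivity
  -- first substitution : r = f₁ u = t⁻¹ * u ^ (-(α/2))
  set f₁ : ℝ → ℝ := fun u => t⁻¹ * u ^ (-(α/2)) with hf₁_def
  set f₁' : ℝ → ℝ := fun u => t⁻¹ * (-(α/2) * u ^ (-(α/2) - 1)) with hf₁'_def
  have hd1 : ∀ u ∈ Set.Ioi (0:ℝ), HasDerivWithinAt f₁ (f₁' u) (Set.Ioi 0) u := fun u hu =>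
    ((hasDerivAt_rpow_const (p := -(α/2)) (Or.inl (ne_of_gt hu))).const_mul
      t⁻¹).hasDerivWithinAt
  have hroot : ∀ z : ℝ, 0 < z → (z ^ (-(α/2))) ^ (-(α/2))⁻¹ = z := fun z hz => by
    rw [← Real.rpow_mul hz.le, mul_inv_cancel₀ hp, Real.rpow_one]
  have hinj1 : Set.InjOn f₁ (Set.Ioi 0) := by
    intro x hx y hy h
    have h2 : x ^ (-(α/2)) = y ^ (-(α/2)) := mul_left_cancel₀ (inv_ne_zero ht.ne') h
    calc x = (x ^ (-(α/2))) ^ (-(α/2))⁻¹ := (hroot x hx).symm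
      _ = (y ^ (-(α/2))) ^ (-(α/2))⁻¹ := by rw [h2]
      _ = y := hroot y hy
  have himg1 : f₁ '' Set.Ioi 0 = Set.Ioi 0 := by
    ext x
    constructor
    · rintro ⟨u, hu, rfl⟩
      exact mul_pos (inv_pos.mpr ht) (rpow_pos_of_pos hu _)
    · intro hx
      refine ⟨(t * x) ^ (-(α/2))⁻¹, rpow_pos_of_pos (mul_pos ht hx) _, ?_⟩
      show t⁻¹ * ((t * x) ^ (-(α/2))⁻¹) ^ (-(α/2)) = x
      rw [← Real.rpow_mul (mul_pos ht hx).le, inv_mul_cancel₀ hp, Real.rpow_one]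
      field_simp
  have step1 := lintegral_image_eq_lintegral_abs_deriv_mul' measurableSet_Ioi hd1 hinj1
    (fun r => ENNReal.ofReal (r ^ (-γ) / ((r * w) ^ (-2/α) + θ ^ 2)))
  rw [himg1] at step1
  rw [step1]
  -- pointwise computation for substitution 1
  have point1 : ∀ᵐ u ∂(volume : Measure ℝ), u ∈ Set.Ioi (0:ℝ) →
      ENNReal.ofReal |f₁' u| * ENNReal.ofReal (f₁ u ^ (-γ) / ((f₁ u * w) ^ (-2/α) + θ ^ 2))
        = ENNReal.ofReal (α / 2 * w ^ (γ - 1) * |θ| ^ (1 - 2 * H))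
            * ENNReal.ofReal (u ^ ((3/2 - H) - 1) / (1 + u)) := by
    refine Filter.Eventually.of_forall fun u hu => ?_
    have hu0 : (0:ℝ) < u := hu
    have h1u : (0:ℝ) < 1 + u := by linarith
    rw [← ENNReal.ofReal_mul (abs_nonneg _), ← ENNReal.ofReal_mul hK]
    congr 1
    have habs : |f₁' u| = t⁻¹ * (α/2) * u ^ (-(α/2) - 1) := by
      show |t⁻¹ * (-(α/2) * u ^ (-(α/2) - 1))| = _
      rw [abs_mul, abs_mul, abs_neg, abs_of_pos (inv_pos.mpr ht),
        abs_of_pos (by positivity : (0:ℝ) < α/2),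
        abs_of_pos (rpow_pos_of_pos hu0 _), mul_assoc]
    have hfw : f₁ u * w = |θ| ^ (-α) * u ^ (-(α/2)) := by
      show t⁻¹ * u ^ (-(α/2)) * w = _
      rw [ht_def, Real.rpow_neg hθa.le]
      field_simp
    have hden : (f₁ u * w) ^ (-2/α) = θ ^ 2 * u := by
      rw [hfw, Real.mul_rpow (rpow_pos_of_pos hθa _).le (rpow_pos_of_pos hu0 _).le,
        ← Real.rpow_mul hθa.le, ← Real.rpow_mul hu0.le,
        show -α * (-2/α) = (2:ℝ) by field_simp,
        show -(α/2) * (-2/α) = (1:ℝ) by field_simp,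
        Real.rpow_one, hθsq]
    have hnum : f₁ u ^ (-γ) = t⁻¹ ^ (-γ) * u ^ (α * γ / 2) := by
      show (t⁻¹ * u ^ (-(α/2))) ^ (-γ) = _
      rw [Real.mul_rpow (inv_pos.mpr ht).le (rpow_pos_of_pos hu0 _).le,
        ← Real.rpow_mul hu0.le]
      ring_nf
    have hconst : t⁻¹ * t⁻¹ ^ (-γ) = w ^ (γ - 1) * (|θ| ^ (1 - 2*H) * θ ^ 2) := by
      have h1 : t⁻¹ ^ (-γ) = t ^ γ := by
        rw [Real.inv_rpow ht.le, ← Real.rpow_neg ht.le, neg_neg]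
      have h2 : t⁻¹ * t ^ γ = t ^ (γ - 1) := by
        rw [← Real.rpow_neg_one t, ← Real.rpow_add ht, show (-1) + γ = γ - 1 from by ring]
      rw [h1, h2, ht_def, Real.mul_rpow hw.le (rpow_pos_of_pos hθa _).le,
        ← Real.rpow_mul hθa.le, hαγ, show (3:ℝ) - 2*H = (1 - 2*H) + 2 from by ring,
        Real.rpow_add hθa, hθsq]
    have hupow : u ^ (-(α/2) - 1) * u ^ (α * γ / 2) = u ^ ((3/2 - H) - 1) := by
      rw [← Real.rpow_add hu0]
      congr 1
      linarith
    rw [habs, hden, hnum]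
    conv_rhs => rw [mul_div_assoc']
    conv_lhs => rw [mul_div_assoc']
    rw [div_eq_div_iff (by positivity : (0:ℝ) < θ^2*u + θ^2).ne' h1u.ne']
    linear_combination (α/2 * (1+u) * (u ^ (-(α/2) - 1) * u ^ (α*γ/2))) * hconst +
      (α/2 * (1+u) * (w ^ (γ-1) * (|θ| ^ (1-2*H) * θ^2))) * hupow
  rw [setLIntegral_congr_fun_ae measurableSet_Ioi point1,
    lintegral_const_mul' _ _ ENNReal.ofReal_ne_top]
  -- second substitution : u = f₂ x = x⁻¹ - 1 on (0,1)
  set f₂ : ℝ → ℝ := fun x => x⁻¹ - 1 with hf₂_def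
  set f₂' : ℝ → ℝ := fun x => -(x^2)⁻¹ with hf₂'_def
  have hd2 : ∀ x ∈ Set.Ioo (0:ℝ) 1, HasDerivWithinAt f₂ (f₂' x) (Set.Ioo 0 1) x := fun x hx =>
    ((hasDerivAt_inv hx.1.ne').sub_const 1).hasDerivWithinAt
  have hinj2 : Set.InjOn f₂ (Set.Ioo 0 1) := by
    intro x hx y hy h
    have h' : x⁻¹ - 1 = y⁻¹ - 1 := h
    have h'' : x⁻¹ = y⁻¹ := by linarith
    exact inv_injective h''
  have himg2 : f₂ '' Set.Ioo 0 1 = Set.Ioi 0 := by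
    ext u
    constructor
    · rintro ⟨x, hx, rfl⟩
      have : (1:ℝ) < x⁻¹ := (one_lt_inv₀ hx.1).mpr hx.2
      show (0:ℝ) < x⁻¹ - 1
      linarith
    · intro hu
      have hu0 : (0:ℝ) < u := hu
      refine ⟨(1+u)⁻¹, ⟨by positivity, ?_⟩, ?_⟩
      · rw [inv_lt_one_iff₀]; right; linarith
      · show ((1+u)⁻¹)⁻¹ - 1 = u
        rw [inv_inv]; ring
  have step2 := lintegral_image_eq_lintegral_abs_deriv_mul' measurableSet_Ioo hd2 hinj2
    (fun u => ENNReal.ofReal (u ^ ((3/2 - H) - 1) / (1 + u)))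
  rw [himg2] at step2
  rw [step2]
  -- pointwise computation for substitution 2
  have point2 : ∀ᵐ x ∂(volume : Measure ℝ), x ∈ Set.Ioo (0:ℝ) 1 →
      ENNReal.ofReal |f₂' x| * ENNReal.ofReal (f₂ x ^ ((3/2 - H) - 1) / (1 + f₂ x))
        = ENNReal.ofReal (x ^ ((H - 1/2) - 1) * (1 - x) ^ ((3/2 - H) - 1)) := by
    refine Filter.Eventually.of_forall fun x hx => ?_
    obtain ⟨hx0, hx1⟩ := hx
    rw [← ENNReal.ofReal_mul (abs_nonneg _)]
    congr 1
    have habs : |f₂' x| = (x^2)⁻¹ := by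
      show |(-(x^2)⁻¹)| = _
      rw [abs_neg, abs_of_pos (by positivity)]
    have he1 : f₂ x = (1-x)/x := by
      show x⁻¹ - 1 = _
      field_simp
    have he2 : (1:ℝ) + f₂ x = x⁻¹ := by
      show 1 + (x⁻¹ - 1) = x⁻¹; ring
    have hsum : x ^ ((H - 1/2) - 1) * x ^ ((3/2 - H) - 1) = x⁻¹ := by
      rw [← Real.rpow_add hx0, show ((H - 1/2) - 1) + ((3/2 - H) - 1) = (-1:ℝ) by ring,
        Real.rpow_neg_one]
    have hxb : (0:ℝ) < x ^ ((3/2 - H) - 1) := rpow_pos_of_pos hx0 _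
    rw [he2, he1, habs, Real.div_rpow (by linarith) hx0.le, div_inv_eq_mul,
      show (x^2)⁻¹ * ((1-x) ^ ((3/2 - H) - 1) / x ^ ((3/2 - H) - 1) * x)
          = (x^2)⁻¹ * ((1-x) ^ ((3/2 - H) - 1) * x) / x ^ ((3/2 - H) - 1) from by ring,
      div_eq_iff hxb.ne',
      show ((x:ℝ)^2)⁻¹ * ((1-x) ^ ((3/2 - H) - 1) * x) = (1-x) ^ ((3/2 - H) - 1) * x⁻¹ from by
        rw [sq]
        field_simp]
    linear_combination (-(1-x) ^ ((3/2 - H) - 1)) * hsum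
  rw [setLIntegral_congr_fun_ae measurableSet_Ioo point2]
  -- the beta integral
  have hbint : IntegrableOn (fun x : ℝ => x ^ ((H - 1/2) - 1) * (1-x) ^ ((3/2 - H) - 1))
      (Set.Ioo 0 1) :=
    betaIntegrableOn (by linarith) (by linarith) (by linarith) (by linarith)
  have hbnn : 0 ≤ᵐ[(volume : Measure ℝ).restrict (Set.Ioo 0 1)]
      fun x : ℝ => x ^ ((H - 1/2) - 1) * (1-x) ^ ((3/2 - H) - 1) := by
    refine (ae_restrict_iff' measurableSet_Ioo).mpr (ae_of_all _ fun x hx => ?_)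
    exact mul_nonneg (rpow_nonneg hx.1.le _) (rpow_nonneg (by linarith [hx.2]) _)
  rw [← ofReal_integral_eq_lintegral_ofReal hbint hbnn, ← ENNReal.ofReal_mul hK]
  have hB : ∫ x in (0:ℝ)..1, x ^ ((H - 1/2) - 1) * (1 - x) ^ ((3/2 - H) - 1)
      = ∫ x in Set.Ioo (0:ℝ) 1, x ^ ((H - 1/2) - 1) * (1 - x) ^ ((3/2 - H) - 1) := by
    rw [intervalIntegral.integral_of_le zero_le_one, integral_Ioc_eq_integral_Ioo]
  rw [hB]
  congr 1
  ring
end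

section
/- Let α > 0, w > 0, θ ∈ ℝ with θ ≠ 0, and γ ∈ ℝ, and set H := (3 − α(γ−1))/2. If H ∉ (1/2, 3/2), then ∫_0^∞ r^{−γ} / ((r w)^{−2/α} + θ²) dr = +∞. -/
open MeasureTheory

/-- For `α > 0`, `w > 0`, `θ ≠ 0`, `γ ∈ ℝ` and `H := (3 - α(γ-1))/2`, if
`H ∉ (1/2, 3/2)` then `∫_0^∞ r^{-γ}/((rw)^{-2/α} + θ²) dr = +∞`. -/
theorem stmt_4 (α w θ γ H : ℝ) (hα : 0 < α) (hw : 0 < w) (hθ : θ ≠ 0)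
    (hH : H = (3 - α * (γ - 1)) / 2) (hH2 : H ∉ Set.Ioo (1/2 : ℝ) (3/2 : ℝ)) :
    ∫⁻ r in Set.Ioi (0:ℝ),
        ENNReal.ofReal (r ^ (-γ) / ((r * w) ^ (-2/α) + θ ^ 2)) = ⊤ := by
  set f : ℝ → ℝ := fun r => r ^ (-γ) / ((r * w) ^ (-2/α) + θ ^ 2) with hfdef
  by_contra hcon
  have hθ2 : (0:ℝ) < θ ^ 2 := by positivity
  have hmeasf : Measurable f := by fun_prop
  have hnn : 0 ≤ᵐ[volume.restrict (Set.Ioi (0:ℝ))] f := by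
    filter_upwards [ae_restrict_mem measurableSet_Ioi] with r hr
    have hr0 : (0:ℝ) < r := hr
    positivity
  have hint : Integrable f (volume.restrict (Set.Ioi (0:ℝ))) :=
    (lintegral_ofReal_ne_top_iff_integrable hmeasf.aestronglyMeasurable hnn).mp hcon
  have hint' : IntegrableOn f (Set.Ioi (0:ℝ)) := hint
  -- positivity of denominator on r > 0
  have hden : ∀ r : ℝ, 0 < r → 0 < (r * w) ^ (-2/α) + θ ^ 2 := by
    intro r hr; positivity
  rcases le_or_gt γ 1 with hγ | hγ
  · -- case γ ≤ 1 : divergence at infinity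
    set t : ℝ := max 1 w⁻¹ with ht_def
    have ht : (0:ℝ) < t := lt_of_lt_of_le zero_lt_one (le_max_left _ _)
    have hft : IntegrableOn f (Set.Ioi t) :=
      hint'.mono_set (Set.Ioi_subset_Ioi ht.le)
    have key : IntegrableOn (fun r : ℝ => r ^ (-γ)) (Set.Ioi t) := by
      apply Integrable.mono' (hft.const_mul (1 + θ ^ 2))
      · exact (by fun_prop : Measurable fun r : ℝ => r ^ (-γ)).aestronglyMeasurable
      · filter_upwards [ae_restrict_mem measurableSet_Ioi] with r hr
        have hr1 : (1:ℝ) < r := lt_of_le_of_lt (le_max_left _ _) hr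
        have hr0 : (0:ℝ) < r := lt_trans zero_lt_one hr1
        have hrw1 : (1:ℝ) ≤ r * w := by
          have : w⁻¹ < r := lt_of_le_of_lt (le_max_right _ _) hr
          calc (1:ℝ) = w⁻¹ * w := by field_simp
          _ ≤ r * w := by nlinarith
        have hA : (r * w) ^ (-2/α) ≤ 1 :=
          Real.rpow_le_one_of_one_le_of_nonpos hrw1 (div_nonpos_of_nonpos_of_nonneg (by norm_num) hα.le)
        have hD : (r * w) ^ (-2/α) + θ ^ 2 ≤ 1 + θ ^ 2 := by linarith
        have hx : (0:ℝ) ≤ r ^ (-γ) := Real.rpow_nonneg hr0.le _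
        rw [Real.norm_eq_abs, abs_of_nonneg hx]
        calc r ^ (-γ) = (1 + θ ^ 2) * (r ^ (-γ) / (1 + θ ^ 2)) := by field_simp
        _ ≤ (1 + θ ^ 2) * f r := by
            apply mul_le_mul_of_nonneg_left _ (by positivity)
            exact div_le_div_of_nonneg_left hx (hden r hr0) hD
    rw [integrableOn_Ioi_rpow_iff ht] at key
    linarith
  · -- case γ > 1; from H ∉ Ioo we get α*(γ-1) ≥ 2
    have hαγ : 2 ≤ α * (γ - 1) := by
      rcases not_and_or.mp (fun h => hH2 ⟨h.1, h.2⟩) with h | h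
      · push_neg at h; rw [hH] at h; nlinarith
      · push_neg at h; rw [hH] at h; nlinarith [mul_pos hα (by linarith : (0:ℝ) < γ - 1)]
    have hexp : -γ + 2/α ≤ -1 := by
      have h2α : 2/α ≤ γ - 1 := (div_le_iff₀ hα).mpr (by nlinarith)
      linarith
    set t : ℝ := (θ ^ 2) ^ (-(α/2)) * w⁻¹ with ht_def
    have ht : (0:ℝ) < t := by positivity
    have hft : IntegrableOn f (Set.Ioo (0:ℝ) t) :=
      hint'.mono_set Set.Ioo_subset_Ioi_self
    have key : IntegrableOn (fun r : ℝ => r ^ (-γ + 2/α)) (Set.Ioo (0:ℝ) t) := by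
      apply Integrable.mono' (hft.const_mul (2 / w ^ (2/α)))
      · exact (by fun_prop : Measurable fun r : ℝ => r ^ (-γ + 2/α)).aestronglyMeasurable
      · filter_upwards [ae_restrict_mem measurableSet_Ioo] with r hr
        obtain ⟨hr0, hrt⟩ := hr
        have hrw : (0:ℝ) < r * w := by positivity
        have hrw2 : r * w < (θ ^ 2) ^ (-(α/2)) := by
          have := mul_lt_mul_of_pos_right hrt hw
          rwa [inv_mul_cancel_right₀ hw.ne'] at this
        have hA : θ ^ 2 < (r * w) ^ (-2/α) := by
          have h1 : ((θ ^ 2) ^ (-(α/2))) ^ (-2/α) < (r * w) ^ (-2/α) :=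
            Real.rpow_lt_rpow_of_neg hrw hrw2 (div_neg_of_neg_of_pos (by norm_num) hα)
          have h2 : ((θ ^ 2) ^ (-(α/2))) ^ (-2/α) = θ ^ 2 := by
            rw [← Real.rpow_mul (by positivity : (0:ℝ) ≤ θ ^ 2),
              show (-(α/2)) * (-2/α) = 1 by field_simp, Real.rpow_one]
          rwa [h2] at h1
        have hApos : (0:ℝ) < (r * w) ^ (-2/α) := by positivity
        have hD : (r * w) ^ (-2/α) + θ ^ 2 ≤ 2 * (r * w) ^ (-2/α) := by linarith
        have hx : (0:ℝ) ≤ r ^ (-γ) := Real.rpow_nonneg hr0.le _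
        have hAinv : ((r * w) ^ (-2/α))⁻¹ = (r * w) ^ (2/α) := by
          rw [show (-2/α) = -(2/α) by ring, Real.rpow_neg hrw.le, inv_inv]
        have hprod : r ^ (-γ) * (r * w) ^ (2/α) = r ^ (-γ + 2/α) * w ^ (2/α) := by
          rw [Real.mul_rpow hr0.le hw.le, Real.rpow_add hr0]; ring
        have hxnn : (0:ℝ) ≤ r ^ (-γ + 2/α) := Real.rpow_nonneg hr0.le _
        rw [Real.norm_eq_abs, abs_of_nonneg hxnn]
        have hwpos : (0:ℝ) < w ^ (2/α) := by positivity
        calc r ^ (-γ + 2/α)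
            = (2 / w ^ (2/α)) * (r ^ (-γ) / (2 * (r * w) ^ (-2/α))) := by
              have hrr : r ^ (-γ) = r ^ (-γ + 2/α) * w ^ (2/α) * (r * w) ^ (-2/α) := by
                rw [← hprod, mul_assoc, ← Real.rpow_add hrw,
                  show (2/α) + (-2/α) = 0 by ring, Real.rpow_zero, mul_one]
              rw [hrr]
              have hA' := hApos.ne'
              have hw' := hwpos.ne'
              field_simp
        _ ≤ (2 / w ^ (2/α)) * f r := by
              apply mul_le_mul_of_nonneg_left _ (by positivity)
              exact div_le_div_of_nonneg_left hx (hden r hr0) hD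
    rw [intervalIntegral.integrableOn_Ioo_rpow_iff ht] at key
    linarith
end

section
/- Let α₁, α₂ ∈ (0,2) and let Λ be a probability measure on Δ₁. Then for every θ = (θ₁,θ₂) ∈ ℝ² and every λ > 0, Ψ_{α,Λ}(λ^{1/α₁}θ₁, λ^{1/α₂}θ₂) = λ^{1 − 1/α₁ − 1/α₂} · Ψ_{α,Λ}(θ₁, θ₂), where both sides are understood as values in [0, +∞]. -/
open MeasureTheory
open scoped ENNReal

/-- The open simplex `Δ₁ = {w ∈ (0,1)² : w₁ + w₂ = 1}`. -/
def Delta1 : Set (ℝ × ℝ) :=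
  {w | w.1 ∈ Set.Ioo (0:ℝ) 1 ∧ w.2 ∈ Set.Ioo (0:ℝ) 1 ∧ w.1 + w.2 = 1}

/-- `Ψ_{α,Λ}(θ) = ∫_0^∞ ∫_{Δ₁} ∏_{k=1,2} [2(rw_k)^{-1/α_k}/((rw_k)^{-2/α_k} + θ_k²)]
Λ(dw) r^{-2} dr`, as a Lebesgue integral of a nonnegative function, valued in `[0,∞]`. -/
noncomputable def Psi (α₁ α₂ : ℝ) (Λ : Measure (ℝ × ℝ)) (θ : ℝ × ℝ) : ℝ≥0∞ :=
  ∫⁻ r in Set.Ioi (0:ℝ),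
    (∫⁻ w in Delta1, ENNReal.ofReal
      ((2 * (r * w.1) ^ (-1/α₁) / ((r * w.1) ^ (-2/α₁) + θ.1 ^ 2)) *
       (2 * (r * w.2) ^ (-1/α₂) / ((r * w.2) ^ (-2/α₂) + θ.2 ^ 2))) ∂Λ)
    * ENNReal.ofReal (r ^ (-2 : ℝ))

/-!
Substitute `r ↦ λ r` in the outer integral. Scaling `θ_k` by `λ^{1/α_k}` is the same as scaling
`r w_k` by `λ`, up to a factor `λ^{-1/α_k}` on the `k`-th factor of the integrand; the density
`r^{-2}` contributes `λ²` and the Jacobian of the substitution `λ⁻¹`, and the exponents add up to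
`1 - 1/α₁ - 1/α₂`.
-/

open Set

theorem lintegral_comp_mul_left_Ioi (g : ℝ → ℝ≥0∞) (a : ℝ) {b : ℝ} (hb : 0 < b) :
    ∫⁻ x in Ioi a, g (b * x) = ENNReal.ofReal b⁻¹ * ∫⁻ x in Ioi (b * a), g x := by
  have hmap : Measure.map (b * ·) volume = ENNReal.ofReal b⁻¹ • volume := by
    rw [Real.map_volume_mul_left hb.ne', abs_of_pos (inv_pos.2 hb)]
  have hemb : MeasurableEmbedding (b * ·) := (Homeomorph.mulLeft₀ b hb.ne').measurableEmbedding
  rw [← smul_eq_mul, ← lintegral_smul_measure, ← Measure.restrict_smul, ← hmap,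
    hemb.restrict_map, hemb.lintegral_map, preimage_const_mul_Ioi₀ _ hb,
    mul_div_cancel_left₀ _ hb.ne']

theorem measurableSet_Delta1 : MeasurableSet Delta1 :=
  (measurable_fst measurableSet_Ioo).inter ((measurable_snd measurableSet_Ioo).inter
    (measurableSet_eq_fun (measurable_fst.add measurable_snd) measurable_const))

noncomputable def psiFactor (α θ u : ℝ) : ℝ :=
  2 * u ^ (-1/α) / (u ^ (-2/α) + θ ^ 2)

theorem psiFactor_scale {α θ L u : ℝ} (hL : 0 < L) (hu : 0 < u) :
    psiFactor α (L ^ (1/α) * θ) u = L ^ (-1/α) * psiFactor α θ (L * u) := by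
  have hsq : ∀ {x : ℝ}, 0 < x → x ^ (-2/α) = (x ^ (-1/α)) ^ 2 := fun hx => by
    rw [← Real.rpow_natCast, ← Real.rpow_mul hx.le]
    ring_nf
  have hinv : ∀ {x : ℝ}, 0 < x → x ^ (-1/α) = (x ^ (1/α))⁻¹ := fun hx => by
    rw [← Real.rpow_neg hx.le]; ring_nf
  have ha : 0 < L ^ (1/α) := Real.rpow_pos_of_pos hL _
  have hp : 0 < (u ^ (1/α))⁻¹ := inv_pos.2 (Real.rpow_pos_of_pos hu _)
  unfold psiFactor
  rw [Real.mul_rpow hL.le hu.le, Real.mul_rpow hL.le hu.le, hsq hu, hsq hL, hinv hu, hinv hL]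
  generalize L ^ (1/α) = a at ha ⊢
  generalize (u ^ (1/α))⁻¹ = p at hp ⊢
  field_simp

noncomputable def psiRadial (α₁ α₂ : ℝ) (Λ : Measure (ℝ × ℝ)) (θ : ℝ × ℝ) (r : ℝ) : ℝ≥0∞ :=
  (∫⁻ w in Delta1, ENNReal.ofReal (psiFactor α₁ θ.1 (r * w.1) * psiFactor α₂ θ.2 (r * w.2)) ∂Λ)
    * ENNReal.ofReal (r ^ (-2 : ℝ))

theorem Psi_eq_lintegral_psiRadial (α₁ α₂ : ℝ) (Λ : Measure (ℝ × ℝ)) (θ : ℝ × ℝ) :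
    Psi α₁ α₂ Λ θ = ∫⁻ r in Ioi 0, psiRadial α₁ α₂ Λ θ r :=
  rfl

theorem psiRadial_scale (α₁ α₂ : ℝ) (Λ : Measure (ℝ × ℝ)) (θ₁ θ₂ : ℝ) {L r : ℝ} (hL : 0 < L)
    (hr : 0 < r) :
    psiRadial α₁ α₂ Λ (L ^ (1/α₁) * θ₁, L ^ (1/α₂) * θ₂) r
      = ENNReal.ofReal (L ^ (-1/α₁ + -1/α₂ + 2)) * psiRadial α₁ α₂ Λ (θ₁, θ₂) (L * r) := by
  have hinner : (∫⁻ w in Delta1, ENNReal.ofReal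
        (psiFactor α₁ (L ^ (1/α₁) * θ₁) (r * w.1) * psiFactor α₂ (L ^ (1/α₂) * θ₂) (r * w.2)) ∂Λ)
      = ENNReal.ofReal (L ^ (-1/α₁) * L ^ (-1/α₂)) * ∫⁻ w in Delta1, ENNReal.ofReal
        (psiFactor α₁ θ₁ (L * r * w.1) * psiFactor α₂ θ₂ (L * r * w.2)) ∂Λ := by
    rw [← lintegral_const_mul' _ _ ENNReal.ofReal_ne_top]
    refine setLIntegral_congr_fun measurableSet_Delta1 fun w ⟨⟨hw₁, _⟩, ⟨hw₂, _⟩, _⟩ => ?_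
    rw [psiFactor_scale hL (mul_pos hr hw₁), psiFactor_scale hL (mul_pos hr hw₂),
      ← ENNReal.ofReal_mul (by positivity)]
    ring_nf
  have hdensity : r ^ (-2 : ℝ) = L ^ (2 : ℝ) * (L * r) ^ (-2 : ℝ) := by
    rw [Real.mul_rpow hL.le hr.le, ← mul_assoc, ← Real.rpow_add hL]
    norm_num
  have hconst : ENNReal.ofReal (L ^ (-1/α₁ + -1/α₂ + 2))
      = ENNReal.ofReal (L ^ (-1/α₁) * L ^ (-1/α₂)) * ENNReal.ofReal (L ^ (2 : ℝ)) := by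
    rw [Real.rpow_add hL, Real.rpow_add hL, ENNReal.ofReal_mul (by positivity)]
  simp only [psiRadial]
  rw [hinner, hdensity, ENNReal.ofReal_mul (p := L ^ (2 : ℝ)) (by positivity), hconst]
  ring

theorem stmt_5_general (α₁ α₂ : ℝ) (Λ : Measure (ℝ × ℝ)) (θ₁ θ₂ lam : ℝ) (hlam : 0 < lam) :
    Psi α₁ α₂ Λ (lam ^ (1/α₁) * θ₁, lam ^ (1/α₂) * θ₂)
      = ENNReal.ofReal (lam ^ (1 - 1/α₁ - 1/α₂)) * Psi α₁ α₂ Λ (θ₁, θ₂) := by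
  rw [Psi_eq_lintegral_psiRadial, Psi_eq_lintegral_psiRadial,
    setLIntegral_congr_fun measurableSet_Ioi fun r hr => psiRadial_scale α₁ α₂ Λ θ₁ θ₂ hlam hr,
    lintegral_const_mul' _ _ ENNReal.ofReal_ne_top,
    lintegral_comp_mul_left_Ioi (psiRadial α₁ α₂ Λ (θ₁, θ₂)) 0 hlam, mul_zero, ← mul_assoc,
    ← ENNReal.ofReal_mul (by positivity), ← Real.rpow_neg_one, ← Real.rpow_add hlam]
  congr 3
  ring

/-- operator-scaling property of `Ψ_{α,Λ}`:
`Ψ_{α,Λ}(λ^{1/α₁}θ₁, λ^{1/α₂}θ₂) = λ^{1 - 1/α₁ - 1/α₂} Ψ_{α,Λ}(θ₁,θ₂)` for all `λ > 0`. -/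
theorem stmt_5 (α₁ α₂ : ℝ) (hα₁ : α₁ ∈ Set.Ioo (0:ℝ) 2) (hα₂ : α₂ ∈ Set.Ioo (0:ℝ) 2)
    (Λ : Measure (ℝ × ℝ)) [IsProbabilityMeasure Λ] (hΛ : Λ Delta1ᶜ = 0)
    (θ₁ θ₂ lam : ℝ) (hlam : 0 < lam) :
    Psi α₁ α₂ Λ (lam ^ (1/α₁) * θ₁, lam ^ (1/α₂) * θ₂)
      = ENNReal.ofReal (lam ^ (1 - 1/α₁ - 1/α₂)) * Psi α₁ α₂ Λ (θ₁, θ₂) :=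
  stmt_5_general α₁ α₂ Λ θ₁ θ₂ lam hlam
end

section
/- Let α₁, α₂ ∈ (0,2) and let Λ be a probability measure on Δ₁, and set p := 1/α₁ + 1/α₂ (note p > 1). There exists a constant C, depending only on α₁ and α₂, such that for all θ = (θ₁,θ₂) ∈ ℝ² with θ₁ ≠ 0 and θ₂ ≠ 0, Ψ_{α,Λ}(θ) ≤ C · |θ₁θ₂|^{1/p − 1}; in particular Ψ_{α,Λ}(θ) is finite for all such θ. -/
open MeasureTheory
open scoped ENNReal

/-- First bound on the factor: `2 x^{-1/α} / (x^{-2/α} + t²) ≤ 1/|t|`. -/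
lemma factor_le_inv_abs {x t α : ℝ} (hx : 0 < x) (hα : 0 < α) (ht : t ≠ 0) :
    2 * x ^ (-1/α) / (x ^ (-2/α) + t ^ 2) ≤ 1 / |t| := by
  set a : ℝ := x ^ (-1/α) with ha_def
  have ha : 0 < a := Real.rpow_pos_of_pos hx _
  have hsq : x ^ (-2/α) = a ^ 2 := by
    rw [ha_def, ← Real.rpow_natCast (x ^ (-1/α)) 2, ← Real.rpow_mul hx.le]
    norm_num
    ring_nf
  rw [hsq]
  have hd : 0 < a ^ 2 + t ^ 2 := by positivity
  have habs : 0 < |t| := abs_pos.mpr ht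
  rw [div_le_div_iff₀ hd habs]
  nlinarith [sq_nonneg (a - |t|), sq_abs t]

/-- Second bound on the factor: `2 x^{-1/α} / (x^{-2/α} + t²) ≤ 2 x^{1/α}`. -/
lemma factor_le_rpow {x t α : ℝ} (hx : 0 < x) (hα : 0 < α) :
    2 * x ^ (-1/α) / (x ^ (-2/α) + t ^ 2) ≤ 2 * x ^ (1/α) := by
  set a : ℝ := x ^ (-1/α) with ha_def
  have ha : 0 < a := Real.rpow_pos_of_pos hx _
  have hsq : x ^ (-2/α) = a ^ 2 := by
    rw [ha_def, ← Real.rpow_natCast (x ^ (-1/α)) 2, ← Real.rpow_mul hx.le]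
    norm_num
    ring_nf
  have hinv : x ^ (1/α) = a⁻¹ := by
    rw [ha_def, neg_div, Real.rpow_neg hx.le, inv_inv]
  rw [hsq, hinv]
  have hd : 0 < a ^ 2 + t ^ 2 := by positivity
  rw [div_le_iff₀ hd]
  have h1 : 2 * a⁻¹ * (a ^ 2 + t ^ 2) = 2 * a + 2 * a⁻¹ * t ^ 2 := by
    field_simp
  rw [h1]
  nlinarith [mul_nonneg (inv_nonneg.mpr ha.le) (sq_nonneg t)]

/-- Nonnegativity of the factor. -/
lemma factor_nonneg {x t α : ℝ} (hx : 0 < x) :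
    0 ≤ 2 * x ^ (-1/α) / (x ^ (-2/α) + t ^ 2) := by
  have h1 : 0 < x ^ (-1/α) := Real.rpow_pos_of_pos hx _
  have h2 : 0 < x ^ (-2/α) := Real.rpow_pos_of_pos hx _
  positivity

/-- for `α₁, α₂ ∈ (0,2)` and `p := 1/α₁ + 1/α₂`, there is a constant `C`
depending only on `α₁, α₂` such that for every probability measure `Λ` on `Δ₁` and all
`θ₁, θ₂ ≠ 0`, `Ψ_{α,Λ}(θ) ≤ C |θ₁θ₂|^{1/p - 1}`; in particular `Ψ_{α,Λ}(θ)` is finite. -/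
theorem stmt_7 (α₁ α₂ : ℝ) (hα₁ : α₁ ∈ Set.Ioo (0:ℝ) 2) (hα₂ : α₂ ∈ Set.Ioo (0:ℝ) 2) :
    ∃ C : ℝ, 0 < C ∧
      ∀ (Λ : Measure (ℝ × ℝ)), IsProbabilityMeasure Λ → Λ Delta1ᶜ = 0 →
        ∀ θ₁ θ₂ : ℝ, θ₁ ≠ 0 → θ₂ ≠ 0 →
          Psi α₁ α₂ Λ (θ₁, θ₂)
              ≤ ENNReal.ofReal (C * |θ₁ * θ₂| ^ (1 / (1/α₁ + 1/α₂) - 1)) ∧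
            Psi α₁ α₂ Λ (θ₁, θ₂) ≠ ⊤ := by
  obtain ⟨hα₁0, hα₁2⟩ := hα₁
  obtain ⟨hα₂0, hα₂2⟩ := hα₂
  set p : ℝ := 1/α₁ + 1/α₂ with hp_def
  have hp1 : 1 < p := by
    have h1 : (1:ℝ)/2 < 1/α₁ := by
      rw [div_lt_div_iff₀ (by norm_num) hα₁0]; linarith
    have h2 : (1:ℝ)/2 < 1/α₂ := by
      rw [div_lt_div_iff₀ (by norm_num) hα₂0]; linarith
    rw [hp_def]; linarith
  have hp0 : 0 < p := by linarith
  have hpm1 : 0 < p - 1 := by linarith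
  refine ⟨4/(p-1) + 1, by positivity, ?_⟩
  intro Λ hΛ hΛc θ₁ θ₂ h₁ h₂
  set T : ℝ := |θ₁ * θ₂| with hT_def
  have hT : 0 < T := abs_pos.mpr (mul_ne_zero h₁ h₂)
  set R : ℝ := T ^ (-(1/p)) with hR_def
  have hR : 0 < R := Real.rpow_pos_of_pos hT _
  -- pointwise bounds on the inner integral
  have inner_bd : ∀ (r : ℝ), 0 < r → ∀ B : ℝ,
      (∀ w ∈ Delta1,
        (2 * (r * w.1) ^ (-1/α₁) / ((r * w.1) ^ (-2/α₁) + θ₁ ^ 2)) *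
        (2 * (r * w.2) ^ (-1/α₂) / ((r * w.2) ^ (-2/α₂) + θ₂ ^ 2)) ≤ B) →
      (∫⁻ w in Delta1, ENNReal.ofReal
        ((2 * (r * w.1) ^ (-1/α₁) / ((r * w.1) ^ (-2/α₁) + θ₁ ^ 2)) *
         (2 * (r * w.2) ^ (-1/α₂) / ((r * w.2) ^ (-2/α₂) + θ₂ ^ 2))) ∂Λ)
        ≤ ENNReal.ofReal B := by
    intro r hr B hB
    have hmeas : MeasurableSet Delta1 := by
      unfold Delta1
      apply MeasurableSet.inter
      · exact measurable_fst measurableSet_Ioo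
      apply MeasurableSet.inter
      · exact measurable_snd measurableSet_Ioo
      · exact measurableSet_eq_fun (measurable_fst.add measurable_snd) measurable_const
    calc (∫⁻ w in Delta1, ENNReal.ofReal
        ((2 * (r * w.1) ^ (-1/α₁) / ((r * w.1) ^ (-2/α₁) + θ₁ ^ 2)) *
         (2 * (r * w.2) ^ (-1/α₂) / ((r * w.2) ^ (-2/α₂) + θ₂ ^ 2))) ∂Λ)
        ≤ ∫⁻ _ in Delta1, ENNReal.ofReal B ∂Λ :=
          setLIntegral_mono' hmeas fun w hw => ENNReal.ofReal_le_ofReal (hB w hw)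
      _ = ENNReal.ofReal B * Λ Delta1 := setLIntegral_const _ _
      _ ≤ ENNReal.ofReal B * 1 := by
          gcongr
          exact prob_le_one
      _ = ENNReal.ofReal B := mul_one _
  set F : ℝ → ℝ≥0∞ := fun r =>
    (∫⁻ w in Delta1, ENNReal.ofReal
      ((2 * (r * w.1) ^ (-1/α₁) / ((r * w.1) ^ (-2/α₁) + θ₁ ^ 2)) *
       (2 * (r * w.2) ^ (-1/α₂) / ((r * w.2) ^ (-2/α₂) + θ₂ ^ 2))) ∂Λ)
    * ENNReal.ofReal (r ^ (-2 : ℝ)) with hF_def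
  have hdisj : Disjoint (Set.Ioc (0:ℝ) R) (Set.Ioi R) := by
    rw [Set.disjoint_left]
    exact fun x hx hx' => absurd hx' (not_lt.mpr hx.2)
  have hPsi : Psi α₁ α₂ Λ (θ₁, θ₂) = (∫⁻ r in Set.Ioc 0 R, F r) + ∫⁻ r in Set.Ioi R, F r := by
    rw [show Psi α₁ α₂ Λ (θ₁, θ₂) = ∫⁻ r in Set.Ioi (0:ℝ), F r from rfl,
      ← Set.Ioc_union_Ioi_eq_Ioi hR.le, lintegral_union measurableSet_Ioi hdisj]
  -- bound on the small-r piece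
  have g_bd1 : ∀ r ∈ Set.Ioc (0:ℝ) R, F r ≤ ENNReal.ofReal (4 * r ^ (p - 2)) := by
    intro r hr
    have hr0 : 0 < r := hr.1
    have hinner : (∫⁻ w in Delta1, ENNReal.ofReal
        ((2 * (r * w.1) ^ (-1/α₁) / ((r * w.1) ^ (-2/α₁) + θ₁ ^ 2)) *
         (2 * (r * w.2) ^ (-1/α₂) / ((r * w.2) ^ (-2/α₂) + θ₂ ^ 2))) ∂Λ)
        ≤ ENNReal.ofReal (4 * r ^ p) := by
      apply inner_bd r hr0
      intro w hw
      obtain ⟨hw1, hw2, -⟩ := hw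
      have hx1 : 0 < r * w.1 := mul_pos hr0 hw1.1
      have hx2 : 0 < r * w.2 := mul_pos hr0 hw2.1
      have b1 : (2 * (r * w.1) ^ (-1/α₁) / ((r * w.1) ^ (-2/α₁) + θ₁ ^ 2))
          ≤ 2 * r ^ (1/α₁) := by
        refine (factor_le_rpow hx1 hα₁0).trans ?_
        have : (r * w.1) ^ (1/α₁) ≤ r ^ (1/α₁) :=
          Real.rpow_le_rpow hx1.le (by nlinarith [hw1.2]) (by positivity)
        linarith
      have b2 : (2 * (r * w.2) ^ (-1/α₂) / ((r * w.2) ^ (-2/α₂) + θ₂ ^ 2))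
          ≤ 2 * r ^ (1/α₂) := by
        refine (factor_le_rpow hx2 hα₂0).trans ?_
        have : (r * w.2) ^ (1/α₂) ≤ r ^ (1/α₂) :=
          Real.rpow_le_rpow hx2.le (by nlinarith [hw2.2]) (by positivity)
        linarith
      calc (2 * (r * w.1) ^ (-1/α₁) / ((r * w.1) ^ (-2/α₁) + θ₁ ^ 2)) *
            (2 * (r * w.2) ^ (-1/α₂) / ((r * w.2) ^ (-2/α₂) + θ₂ ^ 2))
          ≤ (2 * r ^ (1/α₁)) * (2 * r ^ (1/α₂)) :=
            mul_le_mul b1 b2 (factor_nonneg hx2) (by positivity)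
        _ = 4 * r ^ p := by
            rw [hp_def, Real.rpow_add hr0]; ring
    calc F r ≤ ENNReal.ofReal (4 * r ^ p) * ENNReal.ofReal (r ^ (-2:ℝ)) := by
          rw [hF_def]; exact mul_le_mul_left hinner _
      _ = ENNReal.ofReal (4 * r ^ p * r ^ (-2:ℝ)) :=
          (ENNReal.ofReal_mul (by positivity)).symm
      _ = ENNReal.ofReal (4 * r ^ (p - 2)) := by
          rw [mul_assoc, ← Real.rpow_add hr0, show p + -2 = p - 2 by ring]
  -- bound on the large-r piece
  have g_bd2 : ∀ r ∈ Set.Ioi R, F r ≤ ENNReal.ofReal (T⁻¹ * r ^ (-2:ℝ)) := by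
    intro r hr
    have hr0 : 0 < r := hR.trans hr
    have hinner : (∫⁻ w in Delta1, ENNReal.ofReal
        ((2 * (r * w.1) ^ (-1/α₁) / ((r * w.1) ^ (-2/α₁) + θ₁ ^ 2)) *
         (2 * (r * w.2) ^ (-1/α₂) / ((r * w.2) ^ (-2/α₂) + θ₂ ^ 2))) ∂Λ)
        ≤ ENNReal.ofReal T⁻¹ := by
      apply inner_bd r hr0
      intro w hw
      obtain ⟨hw1, hw2, -⟩ := hw
      have hx1 : 0 < r * w.1 := mul_pos hr0 hw1.1
      have hx2 : 0 < r * w.2 := mul_pos hr0 hw2.1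
      calc (2 * (r * w.1) ^ (-1/α₁) / ((r * w.1) ^ (-2/α₁) + θ₁ ^ 2)) *
            (2 * (r * w.2) ^ (-1/α₂) / ((r * w.2) ^ (-2/α₂) + θ₂ ^ 2))
          ≤ (1 / |θ₁|) * (1 / |θ₂|) :=
            mul_le_mul (factor_le_inv_abs hx1 hα₁0 h₁) (factor_le_inv_abs hx2 hα₂0 h₂)
              (factor_nonneg hx2) (by positivity)
        _ = T⁻¹ := by
            rw [hT_def, abs_mul]
            field_simp
    calc F r ≤ ENNReal.ofReal T⁻¹ * ENNReal.ofReal (r ^ (-2:ℝ)) := by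
          rw [hF_def]; exact mul_le_mul_left hinner _
      _ = ENNReal.ofReal (T⁻¹ * r ^ (-2:ℝ)) :=
          (ENNReal.ofReal_mul (by positivity)).symm
  -- compute the small-r integral
  have I1 : (∫⁻ r in Set.Ioc (0:ℝ) R, F r)
      ≤ ENNReal.ofReal (4/(p-1) * T ^ (1/p - 1)) := by
    have hint : IntegrableOn (fun r : ℝ => 4 * r ^ (p - 2)) (Set.Ioc 0 R) :=
      ((intervalIntegral.intervalIntegrable_rpow' (by linarith : (-1:ℝ) < p - 2)).1).const_mul 4
    have hRp : R ^ (p - 1) = T ^ (1/p - 1) := by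
      rw [hR_def, ← Real.rpow_mul hT.le]
      congr 1
      field_simp
      ring
    calc (∫⁻ r in Set.Ioc (0:ℝ) R, F r)
        ≤ ∫⁻ r in Set.Ioc (0:ℝ) R, ENNReal.ofReal (4 * r ^ (p - 2)) :=
          setLIntegral_mono' measurableSet_Ioc g_bd1
      _ = ENNReal.ofReal (∫ r in Set.Ioc (0:ℝ) R, 4 * r ^ (p - 2)) :=
          (ofReal_integral_eq_lintegral_ofReal hint
            (((ae_restrict_iff' measurableSet_Ioc).2 (Filter.Eventually.of_forall
              fun r hr => by have h0 := hr.1; positivity)))).symm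
      _ = ENNReal.ofReal (4/(p-1) * T ^ (1/p - 1)) := by
          congr 1
          rw [← intervalIntegral.integral_of_le hR.le,
            intervalIntegral.integral_const_mul,
            integral_rpow (Or.inl (by linarith : (-1:ℝ) < p - 2)),
            show p - 2 + 1 = p - 1 by ring, Real.zero_rpow hpm1.ne', hRp]
          ring
  -- compute the large-r integral
  have I2 : (∫⁻ r in Set.Ioi R, F r) ≤ ENNReal.ofReal (T ^ (1/p - 1)) := by
    have hint : IntegrableOn (fun r : ℝ => T⁻¹ * r ^ (-2:ℝ)) (Set.Ioi R) :=
      (integrableOn_Ioi_rpow_of_lt (by norm_num) hR).const_mul T⁻¹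
    have hRinv : T⁻¹ * R ^ (-1:ℝ) = T ^ (1/p - 1) := by
      rw [hR_def, ← Real.rpow_mul hT.le, ← Real.rpow_neg_one T, ← Real.rpow_add hT]
      congr 1
      ring
    calc (∫⁻ r in Set.Ioi R, F r)
        ≤ ∫⁻ r in Set.Ioi R, ENNReal.ofReal (T⁻¹ * r ^ (-2:ℝ)) :=
          setLIntegral_mono' measurableSet_Ioi g_bd2
      _ = ENNReal.ofReal (∫ r in Set.Ioi R, T⁻¹ * r ^ (-2:ℝ)) :=
          (ofReal_integral_eq_lintegral_ofReal hint
            (((ae_restrict_iff' measurableSet_Ioi).2 (Filter.Eventually.of_forall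
              fun r hr => by
                have : 0 < r := hR.trans hr
                positivity)))).symm
      _ = ENNReal.ofReal (T ^ (1/p - 1)) := by
          congr 1
          rw [MeasureTheory.integral_const_mul,
            integral_Ioi_rpow_of_lt (by norm_num) hR]
          rw [← hRinv]
          norm_num
  -- combine
  have hmain : Psi α₁ α₂ Λ (θ₁, θ₂)
      ≤ ENNReal.ofReal ((4/(p-1) + 1) * T ^ (1/p - 1)) := by
    rw [hPsi]
    refine (add_le_add I1 I2).trans_eq ?_
    rw [← ENNReal.ofReal_add (by positivity) (by positivity)]
    congr 1
    ring
  exact ⟨hmain, ne_top_of_le_ne_top ENNReal.ofReal_ne_top hmain⟩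
end

section
/- Let α₁, α₂ ∈ (0,2) and set p := 1/α₁ + 1/α₂. There exists a constant C, depending only on α₁ and α₂, such that for all w₁, w₂ > 0 and all θ₁, θ₂ ∈ ℝ with θ₁ ≠ 0 and θ₂ ≠ 0, ∫_0^∞ ∏_{k=1,2} min{ (r w_k)^{1/α_k} , (r w_k)^{−1/α_k} θ_k^{−2} } · r^{−2} dr ≤ C · |θ₁θ₂|^{1/p − 1} · w₁^{α₂/(α₁+α₂)} · w₂^{α₁/(α₁+α₂)}. -/
open MeasureTheory
open scoped ENNReal
open Set

/-!
Bounding each minimum by its first branch, resp. its second, the integrand is at most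
`min (K r^(p-2)) (L r^(-p-2))` with `K = w₁^(1/α₁) w₂^(1/α₂)` and `L = (K θ₁² θ₂²)⁻¹`.
Since `p > 1`, the first branch is integrable at `0` and the second at `∞`; integrating each on
its side of the crossing point `d = (L/K)^(1/2p)` gives
`(1/(p-1) + 1/(p+1)) K^((p+1)/2p) L^((p-1)/2p)`, which is the claimed bound.
-/

theorem lintegral_Ioc_zero_const_mul_rpow {K u c : ℝ} (hK : 0 ≤ K) (hu : 0 < u) (hc : 0 ≤ c) :
    ∫⁻ r in Ioc 0 c, ENNReal.ofReal (K * r ^ (u - 1)) = ENNReal.ofReal (K * (c ^ u / u)) := by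
  have hint : IntegrableOn (fun r : ℝ ↦ r ^ (u - 1)) (Ioc 0 c) :=
    (intervalIntegral.intervalIntegrable_rpow' (by linarith)).1
  rw [← ofReal_integral_eq_lintegral_ofReal (hint.const_mul K)
    (ae_restrict_of_forall_mem measurableSet_Ioc fun r hr ↦ by
      have := hr.1.le; positivity),
    integral_const_mul, ← intervalIntegral.integral_of_le hc, integral_rpow (Or.inl (by linarith)),
    sub_add_cancel, Real.zero_rpow hu.ne', sub_zero]

theorem lintegral_Ioi_const_mul_rpow {L v c : ℝ} (hL : 0 ≤ L) (hv : 0 < v) (hc : 0 < c) :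
    ∫⁻ r in Ioi c, ENNReal.ofReal (L * r ^ (-v - 1)) = ENNReal.ofReal (L * (c ^ (-v) / v)) := by
  have hint : IntegrableOn (fun r : ℝ ↦ r ^ (-v - 1)) (Ioi c) :=
    integrableOn_Ioi_rpow_of_lt (by linarith) hc
  rw [← ofReal_integral_eq_lintegral_ofReal (hint.const_mul L)
    (ae_restrict_of_forall_mem measurableSet_Ioi fun r hr ↦ by
      have := hc.trans hr; positivity),
    integral_const_mul, integral_Ioi_rpow_of_lt (by linarith) hc, sub_add_cancel, neg_div_neg_eq]

theorem lintegral_min_rpow_le_of_split {K L u v : ℝ} (hK : 0 ≤ K) (hL : 0 ≤ L) (hu : 0 < u)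
    (hv : 0 < v) {d : ℝ} (hd : 0 < d) :
    ∫⁻ r in Ioi 0, ENNReal.ofReal (min (K * r ^ (u - 1)) (L * r ^ (-v - 1)))
      ≤ ENNReal.ofReal (K * (d ^ u / u) + L * (d ^ (-v) / v)) := by
  rw [← Ioc_union_Ioi_eq_Ioi hd.le, lintegral_union measurableSet_Ioi (Ioc_disjoint_Ioi le_rfl),
    ENNReal.ofReal_add (by positivity) (by positivity),
    ← lintegral_Ioc_zero_const_mul_rpow hK hu hd.le, ← lintegral_Ioi_const_mul_rpow hL hv hd]
  exact add_le_add
    (setLIntegral_mono' measurableSet_Ioc fun r _ ↦ ENNReal.ofReal_le_ofReal (min_le_left _ _))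
    (setLIntegral_mono' measurableSet_Ioi fun r _ ↦ ENNReal.ofReal_le_ofReal (min_le_right _ _))

theorem lintegral_min_rpow_le {K L u v : ℝ} (hK : 0 < K) (hL : 0 < L) (hu : 0 < u) (hv : 0 < v) :
    ∫⁻ r in Ioi 0, ENNReal.ofReal (min (K * r ^ (u - 1)) (L * r ^ (-v - 1)))
      ≤ ENNReal.ofReal ((1 / u + 1 / v) * (K ^ (v / (u + v)) * L ^ (u / (u + v)))) := by
  -- the crossing point `K d^(u-1) = L d^(-v-1)` of the two branches
  set d := (L / K) ^ (1 / (u + v))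
  have huv : u + v ≠ 0 := by positivity
  have hKd : K * d ^ u = K ^ (v / (u + v)) * L ^ (u / (u + v)) := by
    rw [← Real.rpow_mul (by positivity), Real.div_rpow hL.le hK.le,
      show v / (u + v) = 1 - 1 / (u + v) * u by field_simp; ring, Real.rpow_sub hK, Real.rpow_one,
      show u / (u + v) = 1 / (u + v) * u by ring]
    ring
  have hLd : L * d ^ (-v) = K ^ (v / (u + v)) * L ^ (u / (u + v)) := by
    rw [← Real.rpow_mul (by positivity), Real.div_rpow hL.le hK.le,
      show u / (u + v) = 1 + 1 / (u + v) * -v by field_simp; ring, Real.rpow_add hL, Real.rpow_one,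
      show v / (u + v) = -(1 / (u + v) * -v) by ring, Real.rpow_neg hK.le]
    ring
  refine (lintegral_min_rpow_le_of_split hK.le hL.le hu hv (by positivity : 0 < d)).trans_eq ?_
  congr 1
  linear_combination hKd / u + hLd / v

theorem min_mul_min_mul_rpow_le {r w₁ w₂ a₁ a₂ θ₁ θ₂ : ℝ} (hr : 0 < r) (hw₁ : 0 < w₁)
    (hw₂ : 0 < w₂) :
    min ((r * w₁) ^ a₁) ((r * w₁) ^ (-a₁) / θ₁ ^ 2) *
        min ((r * w₂) ^ a₂) ((r * w₂) ^ (-a₂) / θ₂ ^ 2) * r ^ (-2 : ℝ)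
      ≤ min (w₁ ^ a₁ * w₂ ^ a₂ * r ^ (a₁ + a₂ - 2))
          ((w₁ ^ a₁ * w₂ ^ a₂ * (θ₁ * θ₂) ^ 2)⁻¹ * r ^ (-(a₁ + a₂) - 2)) := by
  have hmin₂ : 0 ≤ min ((r * w₂) ^ a₂) ((r * w₂) ^ (-a₂) / θ₂ ^ 2) := by positivity
  have hprod : min ((r * w₁) ^ a₁) ((r * w₁) ^ (-a₁) / θ₁ ^ 2) *
        min ((r * w₂) ^ a₂) ((r * w₂) ^ (-a₂) / θ₂ ^ 2)
      ≤ min ((r * w₁) ^ a₁ * (r * w₂) ^ a₂)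
          ((r * w₁) ^ (-a₁) / θ₁ ^ 2 * ((r * w₂) ^ (-a₂) / θ₂ ^ 2)) :=
    le_min (mul_le_mul (min_le_left _ _) (min_le_left _ _) hmin₂ (by positivity))
      (mul_le_mul (min_le_right _ _) (min_le_right _ _) hmin₂ (by positivity))
  refine (mul_le_mul_of_nonneg_right hprod (by positivity)).trans_eq ?_
  rw [min_mul_of_nonneg _ _ (by positivity)]
  simp only [Real.mul_rpow hr.le hw₁.le, Real.mul_rpow hr.le hw₂.le, Real.rpow_sub hr,
    Real.rpow_neg hr.le, Real.rpow_neg hw₁.le, Real.rpow_neg hw₂.le, Real.rpow_add hr]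
  congr 1 <;> field_simp

theorem rpow_mul_inv_mul_sq_rpow {K T : ℝ} (hK : 0 < K) (hT : 0 < T) (x y : ℝ) :
    K ^ x * (K * T ^ 2)⁻¹ ^ y = T ^ (-(2 * y)) * K ^ (x - y) := by
  rw [Real.inv_rpow (by positivity), Real.mul_rpow hK.le (by positivity), ← Real.rpow_natCast,
    ← Real.rpow_mul hT.le, Real.rpow_sub hK, Real.rpow_neg hT.le]
  push_cast
  field_simp

/-- for `α₁, α₂ ∈ (0,2)` and `p := 1/α₁ + 1/α₂`, there is `C` depending only on
`α₁, α₂` such that for all `w₁, w₂ > 0` and `θ₁, θ₂ ≠ 0`,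
`∫_0^∞ ∏_k min{(rw_k)^{1/α_k}, (rw_k)^{-1/α_k} θ_k^{-2}} r^{-2} dr
  ≤ C |θ₁θ₂|^{1/p-1} w₁^{α₂/(α₁+α₂)} w₂^{α₁/(α₁+α₂)}`. -/
theorem stmt_8 (α₁ α₂ : ℝ) (hα₁ : α₁ ∈ Set.Ioo (0:ℝ) 2) (hα₂ : α₂ ∈ Set.Ioo (0:ℝ) 2) :
    ∃ C : ℝ, 0 < C ∧
      ∀ w₁ w₂ θ₁ θ₂ : ℝ, 0 < w₁ → 0 < w₂ → θ₁ ≠ 0 → θ₂ ≠ 0 →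
        ∫⁻ r in Set.Ioi (0:ℝ), ENNReal.ofReal
            (min ((r * w₁) ^ (1/α₁)) ((r * w₁) ^ (-1/α₁) / θ₁ ^ 2) *
             min ((r * w₂) ^ (1/α₂)) ((r * w₂) ^ (-1/α₂) / θ₂ ^ 2) * r ^ (-2 : ℝ))
          ≤ ENNReal.ofReal (C * |θ₁ * θ₂| ^ (1 / (1/α₁ + 1/α₂) - 1)
              * w₁ ^ (α₂ / (α₁ + α₂)) * w₂ ^ (α₁ / (α₁ + α₂))) := by
  obtain ⟨hα₁0, hα₁2⟩ := hα₁
  obtain ⟨hα₂0, hα₂2⟩ := hα₂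
  set p := 1 / α₁ + 1 / α₂ with hp
  have hp1 : 1 < p := by
    have := one_div_lt_one_div_of_lt hα₁0 hα₁2
    have := one_div_lt_one_div_of_lt hα₂0 hα₂2
    linarith
  have hp0 : p ≠ 0 := by positivity
  refine ⟨1 / (p - 1) + 1 / (p + 1), by positivity, fun w₁ w₂ θ₁ θ₂ hw₁ hw₂ hθ₁ hθ₂ ↦ ?_⟩
  set K := w₁ ^ (1 / α₁) * w₂ ^ (1 / α₂)
  have hK : 0 < K := by positivity
  have hT : 0 < |θ₁ * θ₂| := by positivity
  have hK_rpow : K ^ (1 / p) = w₁ ^ (α₂ / (α₁ + α₂)) * w₂ ^ (α₁ / (α₁ + α₂)) := by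
    rw [Real.mul_rpow (by positivity) (by positivity), ← Real.rpow_mul hw₁.le,
      ← Real.rpow_mul hw₂.le, hp]
    congr 2 <;> field_simp <;> ring
  calc _ ≤ ∫⁻ r in Set.Ioi 0, ENNReal.ofReal
          (min (K * r ^ (p - 1 - 1)) ((K * |θ₁ * θ₂| ^ 2)⁻¹ * r ^ (-(p + 1) - 1))) :=
        setLIntegral_mono' measurableSet_Ioi fun r hr ↦ ENNReal.ofReal_le_ofReal <| by
          rw [sq_abs, show p - 1 - 1 = p - 2 by ring, show -(p + 1) - 1 = -p - 2 by ring]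
          simpa only [neg_div] using min_mul_min_mul_rpow_le hr hw₁ hw₂
    _ ≤ _ := lintegral_min_rpow_le hK (by positivity) (by linarith) (by linarith)
    _ = _ := by
      rw [rpow_mul_inv_mul_sq_rpow hK hT, show p - 1 + (p + 1) = 2 * p by ring,
        show -(2 * ((p - 1) / (2 * p))) = 1 / p - 1 by field_simp; ring,
        show (p + 1) / (2 * p) - (p - 1) / (2 * p) = 1 / p by field_simp; ring, hK_rpow]
      congr 1
      ring
end
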